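/- Consider a 'system' consisting of a single connection of three {1,2,3}-valued random variables R^1 uniform on {2,3}, R^2 uniform on {1,3}, R^3 uniform on {1,2}. Under the 6-valued refinement of Example 2 (R^1 uniform on {2',3'}, R^2 uniform on {1',3}, R^3 uniform on {1,2}, in the set {1,1',2,2',3,3'}) a multimaximal coupling exists, but after the coarse-graining map sending i and i' to i (i=1,2,3), no multimaximal coupling of the resulting {1,2,3}-valued variables exists. Hence existence of multimaximal couplings is not preserved under coarse-graining. -/
import Mathlib


open Finset

/-- The probability, under the joint distribution `T` on `V^k`, that all coordinates
in `I` equal `v`. -/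
noncomputable def prAllV {V : Type*} [Fintype V] [DecidableEq V] (k : ℕ)
    (T : (Fin k → V) → ℝ) (I : Finset (Fin k)) (v : V) : ℝ :=
  ∑ x : Fin k → V, if ∀ i ∈ I, x i = v then T x else 0

/-- `T` is a multimaximal coupling of random variables `R^1,…,R^k` (valued in a common
finite set `V`, with point probabilities `μ i v = Pr[R^i = v]`): `T` is a probability
distribution on `V^k`, its marginals are the `μ i`, and for every nonempty index set
`I` and every value `v`, the probability that all coordinates in `I` equal `v` is
`min_{i∈I} μ i v` (the maximum attainable by any coupling). -/
def IsMultimaxV {V : Type*} [Fintype V] [DecidableEq V] (k : ℕ)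
    (μ : Fin k → V → ℝ) (T : (Fin k → V) → ℝ) : Prop :=
  (∀ x, 0 ≤ T x) ∧ (∑ x : Fin k → V, T x = 1) ∧
    (∀ i v, prAllV k T {i} v = μ i v) ∧
    ∀ I : Finset (Fin k), ∀ hI : I.Nonempty, ∀ v : V,
      prAllV k T I v = I.inf' hI (fun i => μ i v)

/-- Distributions of Example 2 on `{1,1',2,2',3,3'}`, encoded as `Fin 6`
(`1 ↦ 0, 1' ↦ 1, 2 ↦ 2, 2' ↦ 3, 3 ↦ 4, 3' ↦ 5`). -/
noncomputable def mu8 : Fin 3 → Fin 6 → ℝ :=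
  ![![0, 0, 0, 1/2, 0, 1/2], ![0, 1/2, 0, 0, 1/2, 0], ![1/2, 0, 1/2, 0, 0, 0]]

/-- The coarse-graining map lumping `i` and `i'` together: `{1,1',2,2',3,3'} → {1,2,3}`. -/
def f15 : Fin 6 → Fin 3 := ![0, 0, 1, 1, 2, 2]

lemma key {V : Type*} [Fintype V] [DecidableEq V] (k : ℕ) (μ : Fin k → V → ℝ)
    (I : Finset (Fin k)) (v : V) :
    prAllV k (fun x => ∏ i, μ i (x i)) I v
      = ∏ i, if i ∈ I then μ i v else ∑ w, μ i w := by
  unfold prAllV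
  have h : ∀ x : Fin k → V,
      (if ∀ i ∈ I, x i = v then ∏ i, μ i (x i) else 0)
        = ∏ i, (if i ∈ I then (if x i = v then μ i (x i) else 0) else μ i (x i)) := by
    intro x
    split_ifs with hc
    · refine Finset.prod_congr rfl fun i _ => ?_
      split_ifs with hi hxv
      · rfl
      · exact absurd (hc i hi) hxv
      · rfl
    · push_neg at hc
      obtain ⟨i, hi, hne⟩ := hc
      refine (Finset.prod_eq_zero (Finset.mem_univ i) ?_).symm
      simp [hi, hne]
  simp_rw [h]
  rw [← Fintype.prod_sum (fun i a => if i ∈ I then (if a = v then μ i a else 0) else μ i a)]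
  refine Finset.prod_congr rfl fun i _ => ?_
  split_ifs with hi
  · simp
  · rfl

lemma mu8_nonneg : ∀ i a, 0 ≤ mu8 i a := by
  intro i a; fin_cases i <;> fin_cases a <;> norm_num [mu8]

lemma mu8_rowsum : ∀ i, ∑ w, mu8 i w = 1 := by
  intro i; fin_cases i <;> simp [mu8, Fin.sum_univ_succ] <;> norm_num

lemma mu8_disj : ∀ (v : Fin 6) (i j : Fin 3), i ≠ j → mu8 i v = 0 ∨ mu8 j v = 0 := by
  intro v i j h
  fin_cases i <;> fin_cases j <;> fin_cases v <;>
    simp_all [mu8, show (5:Fin 6) = (4:Fin 5).succ from rfl, show (4:Fin 5) = (3:Fin 4).succ from rfl,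
      show (3:Fin 4) = (2:Fin 3).succ from rfl, Matrix.cons_val_succ, Matrix.cons_val_two,
      Matrix.vecHead, Matrix.vecTail, Function.comp, Matrix.cons_val_zero]

lemma prod_eq_inf' : ∀ I : Finset (Fin 3), ∀ hI : I.Nonempty, ∀ v : Fin 6,
    (∏ i ∈ I, mu8 i v) = I.inf' hI (fun i => mu8 i v) := by
  intro I hI v
  by_cases hcard : I.card = 1
  · obtain ⟨i, rfl⟩ := Finset.card_eq_one.mp hcard
    simp
  · have h2 : 1 < I.card := by
      have := Finset.card_pos.mpr hI
      omega
    obtain ⟨a, ha, b, hb, hab⟩ := Finset.one_lt_card.mp h2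
    have hm : ∃ m ∈ I, mu8 m v = 0 := by
      rcases mu8_disj v a b hab with h | h
      · exact ⟨a, ha, h⟩
      · exact ⟨b, hb, h⟩
    obtain ⟨m, hmI, hm0⟩ := hm
    rw [Finset.prod_eq_zero hmI hm0]
    refine le_antisymm ?_ ?_
    · exact Finset.le_inf' hI _ (fun i _ => mu8_nonneg i v)
    · calc I.inf' hI (fun i => mu8 i v) ≤ mu8 m v := Finset.inf'_le _ hmI
        _ = 0 := hm0

set_option linter.unreachableTactic false in
set_option linter.unusedTactic false in
/-- the 6-valued connection of Example 2 admits a multimaximal coupling,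
but its coarse-graining under `f15` (which yields the `{1,2,3}`-valued variables of
Example 1) admits none: existence of multimaximal couplings is not preserved under
coarse-graining. -/
theorem stmt15 :
    (∃ T : (Fin 3 → Fin 6) → ℝ, IsMultimaxV 3 mu8 T) ∧
      ¬ ∃ T : (Fin 3 → Fin 3) → ℝ,
        IsMultimaxV 3 (fun i v => ∑ w : Fin 6, if f15 w = v then mu8 i w else 0) T := by
  constructor
  · refine ⟨fun x => ∏ i, mu8 i (x i), ?_, ?_, ?_, ?_⟩
    · exact fun x => Finset.prod_nonneg fun i _ => mu8_nonneg i (x i)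
    · rw [← Fintype.prod_sum (fun i w => mu8 i w)]
      simp [mu8_rowsum]
    · intro i v
      rw [key]
      simp [mu8_rowsum]
    · intro I hI v
      rw [key]
      simp only [mu8_rowsum]
      rw [show (∏ i, if i ∈ I then mu8 i v else 1) = ∏ i ∈ univ ∩ I, mu8 i v from
        Finset.prod_ite_mem univ I _, Finset.univ_inter]
      exact prod_eq_inf' I hI v
  · rintro ⟨T, hpos, hsum, -, hmm⟩
    set ν : Fin 3 → Fin 3 → ℝ := fun i v => ∑ w : Fin 6, if f15 w = v then mu8 i w else 0 with hν
    have hne01 : ({0,1} : Finset (Fin 3)).Nonempty := ⟨0, by simp⟩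
    have hne02 : ({0,2} : Finset (Fin 3)).Nonempty := ⟨0, by simp⟩
    have hne12 : ({1,2} : Finset (Fin 3)).Nonempty := ⟨1, by simp⟩
    have hval : (ν 0 2 = 1/2 ∧ ν 1 2 = 1/2) ∧ (ν 0 1 = 1/2 ∧ ν 2 1 = 1/2)
        ∧ (ν 1 0 = 1/2 ∧ ν 2 0 = 1/2) := by
      refine ⟨⟨?_, ?_⟩, ⟨?_, ?_⟩, ⟨?_, ?_⟩⟩ <;>
        · simp [hν, f15, mu8, Fin.sum_univ_six,
            show (5:Fin 6) = (4:Fin 5).succ from rfl, show (4:Fin 5) = (3:Fin 4).succ from rfl,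
            show (3:Fin 4) = (2:Fin 3).succ from rfl, Matrix.cons_val_succ, Matrix.cons_val_two,
            Matrix.vecHead, Matrix.vecTail, Function.comp, Matrix.cons_val_zero]
          try norm_num
    obtain ⟨⟨e1, e2⟩, ⟨e3, e4⟩, ⟨e5, e6⟩⟩ := hval
    have h01 := hmm {0,1} hne01 2
    have h02 := hmm {0,2} hne02 1
    have h12 := hmm {1,2} hne12 0
    rw [show (({0,1} : Finset (Fin 3)).inf' hne01 fun i => ν i 2) = 1/2 by
      simp [Finset.inf'_insert, e1, e2]] at h01
    rw [show (({0,2} : Finset (Fin 3)).inf' hne02 fun i => ν i 1) = 1/2 by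
      simp [Finset.inf'_insert, e3, e4]] at h02
    rw [show (({1,2} : Finset (Fin 3)).inf' hne12 fun i => ν i 0) = 1/2 by
      simp [Finset.inf'_insert, e5, e6]] at h12
    have hle : prAllV 3 T {0,1} 2 + prAllV 3 T {0,2} 1 + prAllV 3 T {1,2} 0
        ≤ ∑ x : Fin 3 → Fin 3, T x := by
      unfold prAllV
      rw [← Finset.sum_add_distrib, ← Finset.sum_add_distrib]
      refine Finset.sum_le_sum fun x _ => ?_
      simp only [Finset.mem_insert, Finset.mem_singleton, forall_eq_or_imp, forall_eq]
      split_ifs <;> simp_all <;> linarith [hpos x]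
    rw [h01, h02, h12, hsum] at hle
    linarith
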